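/- arXiv:1405.4602 — 3 statements merged into one kernel-verified Lean document; each statement's English description precedes it below -/
import Mathlib

section
/- The vector space H̃ = H ⊕ T with multiplication (x + f)(y + g) = xy + f·y (x, y ∈ H, f, g ∈ T) is a right Leibniz algebra: it satisfies (uv)w = (uw)v + u(vw) for all u, v, w ∈ H̃. -/
/-- The 3-dimensional Heisenberg algebra `H` over `ℚ`, with basis `a = (1,0,0)`,
`b = (0,1,0)`, `c = (0,0,1)`: an element `(x₁,x₂,x₃)` stands for `x₁a + x₂b + x₃c`. -/
abbrev H : Type := ℚ × ℚ × ℚ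

/-- Multiplication in `H`: `ba = -ab = c`, all other products of basis elements zero. -/
def Hmul (x y : H) : H := (0, 0, x.2.1 * y.1 - x.1 * y.2.1)

/-- The basis elements of `H`. -/
def aH : H := (1, 0, 0)
def bH : H := (0, 1, 0)
def cH : H := (0, 0, 1)

/-- The right action of `H` on `T = ℚ[t]`: `f·a = f'`, `f·b = t·f`, `f·c = f`,
extended linearly. -/
noncomputable def Tact (f : Polynomial ℚ) (x : H) : Polynomial ℚ :=
  Polynomial.C x.1 * Polynomial.derivative f +
    Polynomial.C x.2.1 * (Polynomial.X * f) + Polynomial.C x.2.2 * f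

/-- The Leibniz algebra `H̃ = H ⊕ T`. -/
abbrev Htil : Type := H × Polynomial ℚ

/-- Multiplication in `H̃`: `(x + f)(y + g) = xy + f·y`. -/
noncomputable def HtilMul (u v : Htil) : Htil := (Hmul u.1 v.1, Tact u.2 v.1)

/-- `H̃ = H ⊕ T` with multiplication `(x+f)(y+g) = xy + f·y`
is a right Leibniz algebra: `(uv)w = (uw)v + u(vw)`. -/
theorem Htil_is_leibniz (u v w : Htil) :
    HtilMul (HtilMul u v) w = HtilMul (HtilMul u w) v + HtilMul u (HtilMul v w) := by
  obtain ⟨⟨x1,x2,x3⟩, f⟩ := u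
  obtain ⟨⟨y1,y2,y3⟩, g⟩ := v
  obtain ⟨⟨z1,z2,z3⟩, h⟩ := w
  simp only [HtilMul, Hmul, Tact, Prod.mk_add_mk, Prod.ext_iff]
  refine ⟨⟨by ring, by ring, by ring⟩, ?_⟩
  simp only [map_add, map_mul, Polynomial.derivative_C, Polynomial.derivative_X,
    Polynomial.derivative_mul, Polynomial.derivative_C_mul, map_zero, map_sub]
  ring
end

section
/- For a partition λ of n, define m(λ) = 1 if λ = (n), (p,p), (p,p,p), or (p+q+r+1, p+q+1, p+1, 1) with p,q,r ≥ 0; m(λ) = 2 if λ = (p+q, p), (p+q, p, p), or (p+q, p+q, p) with p,q ≥ 1; m(λ) = 3 if λ = (p+q+r, p+q, p) with p,q,r ≥ 1; and m(λ) = 0 otherwise. Then the sum Σ_{λ ⊢ n} m(λ) equals (n² + n + δ)/3, where δ = 1 if n ≡ 1 (mod 3) and δ = 0 otherwise. -/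
open Classical in
/-- The multiplicity `m_λ(Ṽ₃)` of an irreducible `S_n`-module in `P_n(Ṽ₃)`,
as a function of the multiset of parts of the partition `λ` (Theorem 1). -/
noncomputable def multV3 (s : Multiset ℕ) : ℕ :=
  if (∃ n : ℕ, 1 ≤ n ∧ s = {n}) ∨ (∃ p : ℕ, 1 ≤ p ∧ s = {p, p}) ∨
      (∃ p : ℕ, 1 ≤ p ∧ s = {p, p, p}) ∨
      (∃ p q r : ℕ, s = {p + q + r + 1, p + q + 1, p + 1, 1}) then 1
  else if ∃ p q : ℕ, 1 ≤ p ∧ 1 ≤ q ∧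
      (s = {p + q, p} ∨ s = {p + q, p, p} ∨ s = {p + q, p + q, p}) then 2
  else if ∃ p q r : ℕ, 1 ≤ p ∧ 1 ≤ q ∧ 1 ≤ r ∧ s = {p + q + r, p + q, p} then 3
  else 0

/-!
Every partition with `m_λ ≠ 0` lies in exactly one of the eight families of the definition, and
each family is parametrized bijectively by the lattice points of a simple region: an interval
for the families with one or two free parameters, and the pairs `(p, q)` with `3p + 2q < m` for
the two families with three free parameters (the third parameter being the slack). The colength
is therefore an explicit weighted count. Since the number of such pairs grows by `m + 5` when `m`
grows by `6`, the count grows by `4n + 14 = ((n + 6)² + (n + 6) - n² - n) / 3` when `n` grows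
by `6`, and the first eleven values are checked directly.
-/

open Finset

namespace Multiset

variable {α : Type*} [LinearOrder α]

theorem coe_eq_coe_iff_of_pairwise_ge {l l' : List α} (h : l.Pairwise (· ≥ ·))
    (h' : l'.Pairwise (· ≥ ·)) : (l : Multiset α) = l' ↔ l = l' :=
  ⟨fun e => (coe_eq_coe.mp e).eq_of_pairwise' h h', congrArg _⟩

theorem pair_eq_pair_iff_of_ge {a b c d : α} (hab : b ≤ a) (hcd : d ≤ c) :
    ({a, b} : Multiset α) = {c, d} ↔ a = c ∧ b = d :=
  (coe_eq_coe_iff_of_pairwise_ge (l := [a, b]) (l' := [c, d]) (by simpa) (by simpa)).trans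
    (by simp)

theorem triple_eq_triple_iff_of_ge {a b c a' b' c' : α} (hab : b ≤ a) (hbc : c ≤ b)
    (hab' : b' ≤ a') (hbc' : c' ≤ b') :
    ({a, b, c} : Multiset α) = {a', b', c'} ↔ a = a' ∧ b = b' ∧ c = c' :=
  (coe_eq_coe_iff_of_pairwise_ge (l := [a, b, c]) (l' := [a', b', c'])
    (by simp [hab, hbc, hbc.trans hab]) (by simp [hab', hbc', hbc'.trans hab'])).trans (by simp)

theorem quad_eq_quad_iff_of_ge {a b c d a' b' c' d' : α} (hab : b ≤ a) (hbc : c ≤ b)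
    (hcd : d ≤ c) (hab' : b' ≤ a') (hbc' : c' ≤ b') (hcd' : d' ≤ c') :
    ({a, b, c, d} : Multiset α) = {a', b', c', d'} ↔ a = a' ∧ b = b' ∧ c = c' ∧ d = d' :=
  (coe_eq_coe_iff_of_pairwise_ge (l := [a, b, c, d]) (l' := [a', b', c', d'])
    (by simp [hab, hbc, hcd, hbc.trans hab, hcd.trans hbc, (hcd.trans hbc).trans hab])
    (by simp [hab', hbc', hcd', hbc'.trans hab', hcd'.trans hbc', (hcd'.trans hbc').trans hab'])
    ).trans (by simp)

end Multiset

theorem Nat.Partition.card_filter_eq_card_of_injOn {n : ℕ} {ι : Type*} (P : n.Partition → Prop)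
    [DecidablePred P] (t : Finset ι) (g : ι → Multiset ℕ) (hg : Set.InjOn g t)
    (hpos : ∀ i ∈ t, ∀ a ∈ g i, 0 < a) (hsum : ∀ i ∈ t, (g i).sum = n)
    (hP : ∀ μ : n.Partition, P μ ↔ ∃ i ∈ t, g i = μ.parts) :
    #{μ | P μ} = #t := by
  refine (card_bij (fun i hi => ⟨g i, hpos i hi _, hsum i hi⟩) (fun i hi => ?_)
    (fun i hi j hj h => hg hi hj (congrArg Nat.Partition.parts h)) (fun μ hμ => ?_)).symm
  · simpa [hP] using ⟨i, hi, rfl⟩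
  · obtain ⟨i, hi, h⟩ := (hP μ).1 (mem_filter.1 hμ).2
    exact ⟨i, hi, Nat.Partition.ext h⟩

/-- The pairs `(p, q)` with `3p + 2q < m`, fibred over `p`. The strict bound makes
`latticeBelow (n - k)` empty for `n ≤ k`, despite truncated subtraction. -/
def latticeBelow (m : ℕ) : Finset (Σ _ : ℕ, ℕ) :=
  (range ((m + 2) / 3)).sigma fun p => range ((m + 1 - 3 * p) / 2)

theorem mem_latticeBelow {m : ℕ} {x : Σ _ : ℕ, ℕ} :
    x ∈ latticeBelow m ↔ 3 * x.1 + 2 * x.2 < m := by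
  simp only [latticeBelow, mem_sigma, mem_range]
  omega

theorem card_latticeBelow_add_six (m : ℕ) :
    #(latticeBelow (m + 6)) = #(latticeBelow m) + m + 5 := by
  simp only [latticeBelow, card_sigma, card_range]
  -- The fibre over `p + 2` at level `m + 6` is the fibre over `p` at level `m`; the fibres over
  -- `0` and `1` contribute `(m + 7) / 2 + (m + 4) / 2 = m + 5`.
  rw [show (m + 6 + 2) / 3 = (m + 2) / 3 + 2 by omega, sum_range_succ', sum_range_succ']
  rw [sum_congr rfl fun p _ => show (m + 6 + 1 - 3 * (p + 1 + 1)) / 2 = (m + 1 - 3 * p) / 2 by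
    congr 1; omega]
  omega

section Counting

open Classical

theorem card_filter_parts_eq_replicate (n k : ℕ) (hk : 0 < k) :
    #{μ : n.Partition | ∃ p, 1 ≤ p ∧ μ.parts = Multiset.replicate k p} = n / k - (n - 1) / k := by
  have mem_iff (p : ℕ) : p ∈ Ioc ((n - 1) / k) (n / k) ↔ n - 1 < k * p ∧ k * p ≤ n := by
    rw [mem_Ioc, Nat.div_lt_iff_lt_mul hk, Nat.le_div_iff_mul_le hk, mul_comm p k]
  rw [Nat.Partition.card_filter_eq_card_of_injOn _ (Ioc ((n - 1) / k) (n / k))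
    (Multiset.replicate k), Nat.card_Ioc]
  · exact fun p _ q _ h => Multiset.replicate_right_injective hk.ne' h
  · intro p hp a ha
    rw [Multiset.eq_of_mem_replicate ha]
    exact (Nat.zero_le _).trans_lt (mem_Ioc.1 hp).1
  · intro p hp
    rw [mem_iff] at hp
    rw [Multiset.sum_replicate, smul_eq_mul]
    omega
  · intro μ
    have hs := μ.parts_sum
    constructor
    · rintro ⟨p, hp, h⟩
      rw [h, Multiset.sum_replicate, smul_eq_mul] at hs
      have := Nat.le_mul_of_pos_right k hp
      exact ⟨p, (mem_iff p).2 (by omega), h.symm⟩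
    · rintro ⟨p, hp, h⟩
      exact ⟨p, (Nat.zero_le _).trans_lt (mem_Ioc.1 hp).1, h.symm⟩

theorem card_filter_parts_eq_singleton (n : ℕ) :
    #{μ : n.Partition | ∃ m, 1 ≤ m ∧ μ.parts = {m}} = n - (n - 1) :=
  (card_filter_parts_eq_replicate n 1 one_pos).trans (by rw [Nat.div_one, Nat.div_one])

theorem card_filter_parts_eq_pair_self (n : ℕ) :
    #{μ : n.Partition | ∃ p, 1 ≤ p ∧ μ.parts = {p, p}} = n / 2 - (n - 1) / 2 :=
  card_filter_parts_eq_replicate n 2 two_pos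

theorem card_filter_parts_eq_triple_self (n : ℕ) :
    #{μ : n.Partition | ∃ p, 1 ≤ p ∧ μ.parts = {p, p, p}} = n / 3 - (n - 1) / 3 :=
  card_filter_parts_eq_replicate n 3 three_pos

theorem card_filter_parts_eq_pair_distinct (n : ℕ) :
    #{μ : n.Partition | ∃ p q, 1 ≤ p ∧ 1 ≤ q ∧ μ.parts = {p + q, p}} = (n - 1) / 2 := by
  rw [Nat.Partition.card_filter_eq_card_of_injOn _ (Icc 1 ((n - 1) / 2))
    (fun p => {n - p, p}), Nat.card_Icc, Nat.add_sub_cancel]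
  · intro a ha b hb h
    simp only [coe_Icc, Set.mem_Icc] at ha hb
    rw [Multiset.pair_eq_pair_iff_of_ge (by omega) (by omega)] at h
    omega
  · intro p hp a ha
    simp only [mem_Icc, Multiset.insert_eq_cons, Multiset.mem_cons, Multiset.mem_singleton]
      at hp ha
    omega
  · intro p hp
    simp only [mem_Icc] at hp
    simp only [Multiset.insert_eq_cons, Multiset.sum_cons, Multiset.sum_singleton]
    omega
  · intro μ
    have hs := μ.parts_sum
    constructor
    · rintro ⟨p, q, hp, hq, h⟩
      simp only [h, Multiset.insert_eq_cons, Multiset.sum_cons, Multiset.sum_singleton] at hs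
      exact ⟨p, by simp only [mem_Icc]; omega, by rw [h, show n - p = p + q by omega]⟩
    · rintro ⟨p, hp, h⟩
      simp only [mem_Icc] at hp
      exact ⟨p, n - 2 * p, hp.1, by omega, by rw [← h, show n - p = p + (n - 2 * p) by omega]⟩

theorem card_filter_parts_eq_triple_smaller_repeated (n : ℕ) :
    #{μ : n.Partition | ∃ p q, 1 ≤ p ∧ 1 ≤ q ∧ μ.parts = {p + q, p, p}} = (n - 1) / 3 := by
  rw [Nat.Partition.card_filter_eq_card_of_injOn _ (Icc 1 ((n - 1) / 3))
    (fun p => {n - 2 * p, p, p}), Nat.card_Icc, Nat.add_sub_cancel]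
  · intro a ha b hb h
    simp only [coe_Icc, Set.mem_Icc] at ha hb
    rw [Multiset.triple_eq_triple_iff_of_ge (by omega) le_rfl (by omega) le_rfl] at h
    omega
  · intro p hp a ha
    simp only [mem_Icc, Multiset.insert_eq_cons, Multiset.mem_cons, Multiset.mem_singleton]
      at hp ha
    omega
  · intro p hp
    simp only [mem_Icc] at hp
    simp only [Multiset.insert_eq_cons, Multiset.sum_cons, Multiset.sum_singleton]
    omega
  · intro μ
    have hs := μ.parts_sum
    constructor
    · rintro ⟨p, q, hp, hq, h⟩
      simp only [h, Multiset.insert_eq_cons, Multiset.sum_cons, Multiset.sum_singleton] at hs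
      exact ⟨p, by simp only [mem_Icc]; omega, by rw [h, show n - 2 * p = p + q by omega]⟩
    · rintro ⟨p, hp, h⟩
      simp only [mem_Icc] at hp
      exact ⟨p, n - 3 * p, hp.1, by omega, by
        rw [← h, show n - 2 * p = p + (n - 3 * p) by omega]⟩

theorem card_filter_parts_eq_triple_larger_repeated (n : ℕ) :
    #{μ : n.Partition | ∃ p q, 1 ≤ p ∧ 1 ≤ q ∧ μ.parts = {p + q, p + q, p}} =
      (n - 1) / 2 - n / 3 := by
  rw [Nat.Partition.card_filter_eq_card_of_injOn _ (Ioc (n / 3) ((n - 1) / 2))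
    (fun a => {a, a, n - 2 * a}), Nat.card_Ioc]
  · intro a ha b hb h
    simp only [coe_Ioc, Set.mem_Ioc] at ha hb
    rw [Multiset.triple_eq_triple_iff_of_ge le_rfl (by omega) le_rfl (by omega)] at h
    omega
  · intro a ha b hb
    simp only [mem_Ioc, Multiset.insert_eq_cons, Multiset.mem_cons, Multiset.mem_singleton]
      at ha hb
    omega
  · intro a ha
    simp only [mem_Ioc] at ha
    simp only [Multiset.insert_eq_cons, Multiset.sum_cons, Multiset.sum_singleton]
    omega
  · intro μ
    have hs := μ.parts_sum
    constructor
    · rintro ⟨p, q, hp, hq, h⟩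
      simp only [h, Multiset.insert_eq_cons, Multiset.sum_cons, Multiset.sum_singleton] at hs
      exact ⟨p + q, by simp only [mem_Ioc]; omega, by rw [h, show n - 2 * (p + q) = p by omega]⟩
    · rintro ⟨a, ha, h⟩
      simp only [mem_Ioc] at ha
      exact ⟨n - 2 * a, 3 * a - n, by omega, by omega, by
        rw [← h, show n - 2 * a + (3 * a - n) = a by omega]⟩

theorem card_filter_parts_eq_triple_distinct (n : ℕ) :
    #{μ : n.Partition | ∃ p q r, 1 ≤ p ∧ 1 ≤ q ∧ 1 ≤ r ∧ μ.parts = {p + q + r, p + q, p}} =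
      #(latticeBelow (n - 5)) := by
  rw [Nat.Partition.card_filter_eq_card_of_injOn _ (latticeBelow (n - 5))
    (fun x => {n - 2 * x.1 - x.2 - 3, x.1 + x.2 + 2, x.1 + 1})]
  · rintro ⟨p, q⟩ hx ⟨p', q'⟩ hx' h
    rw [mem_coe, mem_latticeBelow] at hx hx'
    dsimp only at hx hx' h
    rw [Multiset.triple_eq_triple_iff_of_ge (by omega) (by omega) (by omega) (by omega)] at h
    obtain ⟨rfl, rfl⟩ : p = p' ∧ q = q' := by omega
    rfl
  · intro x hx a ha
    rw [mem_latticeBelow] at hx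
    simp only [Multiset.insert_eq_cons, Multiset.mem_cons, Multiset.mem_singleton] at ha
    omega
  · intro x hx
    rw [mem_latticeBelow] at hx
    simp only [Multiset.insert_eq_cons, Multiset.sum_cons, Multiset.sum_singleton]
    omega
  · intro μ
    have hs := μ.parts_sum
    constructor
    · rintro ⟨p, q, r, hp, hq, hr, h⟩
      simp only [h, Multiset.insert_eq_cons, Multiset.sum_cons, Multiset.sum_singleton] at hs
      refine ⟨⟨p - 1, q - 1⟩, mem_latticeBelow.2 (by dsimp only; omega), ?_⟩
      rw [h, show n - 2 * (p - 1) - (q - 1) - 3 = p + q + r by omega,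
        show p - 1 + (q - 1) + 2 = p + q by omega, show p - 1 + 1 = p by omega]
    · rintro ⟨⟨p, q⟩, hx, h⟩
      rw [mem_latticeBelow] at hx
      dsimp only at hx h
      exact ⟨p + 1, q + 1, n - 3 * p - 2 * q - 5, by omega, by omega, by omega, by
        rw [← h, show p + 1 + (q + 1) + (n - 3 * p - 2 * q - 5) = n - 2 * p - q - 3 by omega,
          show p + 1 + (q + 1) = p + q + 2 by omega]⟩

theorem card_filter_parts_eq_quad_last_one (n : ℕ) :
    #{μ : n.Partition | ∃ p q r, μ.parts = {p + q + r + 1, p + q + 1, p + 1, 1}} =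
      #(latticeBelow (n - 3)) := by
  rw [Nat.Partition.card_filter_eq_card_of_injOn _ (latticeBelow (n - 3))
    (fun x => {n - 2 * x.1 - x.2 - 3, x.1 + x.2 + 1, x.1 + 1, 1})]
  · rintro ⟨p, q⟩ hx ⟨p', q'⟩ hx' h
    rw [mem_coe, mem_latticeBelow] at hx hx'
    dsimp only at hx hx' h
    rw [Multiset.quad_eq_quad_iff_of_ge (by omega) (by omega) (by omega) (by omega) (by omega)
      (by omega)] at h
    obtain ⟨rfl, rfl⟩ : p = p' ∧ q = q' := by omega
    rfl
  · intro x hx a ha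
    rw [mem_latticeBelow] at hx
    simp only [Multiset.insert_eq_cons, Multiset.mem_cons, Multiset.mem_singleton] at ha
    omega
  · intro x hx
    rw [mem_latticeBelow] at hx
    simp only [Multiset.insert_eq_cons, Multiset.sum_cons, Multiset.sum_singleton]
    omega
  · intro μ
    have hs := μ.parts_sum
    constructor
    · rintro ⟨p, q, r, h⟩
      simp only [h, Multiset.insert_eq_cons, Multiset.sum_cons, Multiset.sum_singleton] at hs
      exact ⟨⟨p, q⟩, mem_latticeBelow.2 (by dsimp only; omega), by
        rw [h, show n - 2 * p - q - 3 = p + q + r + 1 by omega]⟩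
    · rintro ⟨⟨p, q⟩, hx, h⟩
      rw [mem_latticeBelow] at hx
      dsimp only at hx h
      exact ⟨p, q, n - 3 * p - 2 * q - 4, by
        rw [← h, show p + q + (n - 3 * p - 2 * q - 4) + 1 = n - 2 * p - q - 3 by omega]⟩

theorem sum_multV3_eq (n : ℕ) : ∑ μ : n.Partition, multV3 μ.parts =
    #{μ : n.Partition | ∃ m, 1 ≤ m ∧ μ.parts = {m}} +
    #{μ : n.Partition | ∃ p, 1 ≤ p ∧ μ.parts = {p, p}} +
    #{μ : n.Partition | ∃ p, 1 ≤ p ∧ μ.parts = {p, p, p}} +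
    #{μ : n.Partition | ∃ p q r, μ.parts = {p + q + r + 1, p + q + 1, p + 1, 1}} +
    2 * (#{μ : n.Partition | ∃ p q, 1 ≤ p ∧ 1 ≤ q ∧ μ.parts = {p + q, p}} +
      #{μ : n.Partition | ∃ p q, 1 ≤ p ∧ 1 ≤ q ∧ μ.parts = {p + q, p, p}} +
      #{μ : n.Partition | ∃ p q, 1 ≤ p ∧ 1 ≤ q ∧ μ.parts = {p + q, p + q, p}}) +
    3 * #{μ : n.Partition |
      ∃ p q r, 1 ≤ p ∧ 1 ≤ q ∧ 1 ≤ r ∧ μ.parts = {p + q + r, p + q, p}} := by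
  simp only [card_filter, mul_sum, ← sum_add_distrib]
  refine sum_congr rfl fun μ _ => ?_
  generalize μ.parts = s
  unfold multV3
  simp only [and_or_left, exists_or, ite_or]
  set A1 := ∃ m, 1 ≤ m ∧ s = {m}
  set A2 := ∃ p, 1 ≤ p ∧ s = {p, p}
  set A3 := ∃ p, 1 ≤ p ∧ s = {p, p, p}
  set A4 := ∃ p q r, s = {p + q + r + 1, p + q + 1, p + 1, 1}
  set B1 := ∃ p q, 1 ≤ p ∧ 1 ≤ q ∧ s = {p + q, p}
  set B2 := ∃ p q, 1 ≤ p ∧ 1 ≤ q ∧ s = {p + q, p, p}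
  set B3 := ∃ p q, 1 ≤ p ∧ 1 ≤ q ∧ s = {p + q, p + q, p}
  set C := ∃ p q r, 1 ≤ p ∧ 1 ≤ q ∧ 1 ≤ r ∧ s = {p + q + r, p + q, p}
  -- Families with different numbers of parts are disjoint; the others are told apart by their
  -- sorted parts.
  have hcard : (A1 → s.card = 1) ∧ (A2 → s.card = 2) ∧ (A3 → s.card = 3) ∧ (A4 → s.card = 4) ∧
      (B1 → s.card = 2) ∧ (B2 → s.card = 3) ∧ (B3 → s.card = 3) ∧ (C → s.card = 3) := by
    refine ⟨?_, ?_, ?_, ?_, ?_, ?_, ?_, ?_⟩ <;> rintro ⟨_, _, _, _, _, _, rfl⟩ <;> rfl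
  have hB : (A2 → ¬B1) ∧ (A3 → ¬B2) ∧ (A3 → ¬B3) ∧ (B2 → ¬B3) := by
    refine ⟨?_, ?_, ?_, ?_⟩ <;> rintro ⟨_, _, _, _, _, _, rfl⟩ ⟨_, _, _, _, h⟩ <;>
      first
      | rw [Multiset.pair_eq_pair_iff_of_ge (by omega) (by omega)] at h
      | rw [Multiset.triple_eq_triple_iff_of_ge (by omega) (by omega) (by omega) (by omega)] at h
    all_goals omega
  have hC : (A3 → ¬C) ∧ (B2 → ¬C) ∧ (B3 → ¬C) := by
    refine ⟨?_, ?_, ?_⟩ <;> rintro ⟨_, _, _, _, _, _, rfl⟩ ⟨_, _, _, _, _, _, h⟩ <;>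
      rw [Multiset.triple_eq_triple_iff_of_ge (by omega) (by omega) (by omega) (by omega)] at h <;>
      omega
  clear_value A1 A2 A3 A4 B1 B2 B3 C
  by_cases A1 <;> by_cases A2 <;> by_cases A3 <;> by_cases A4 <;> by_cases B1 <;> by_cases B2 <;>
    by_cases B3 <;> by_cases C <;> simp_all <;> omega

end Counting

theorem three_mul_weighted_count_eq (n : ℕ) :
    3 * (n - (n - 1) + (n / 2 - (n - 1) / 2) + (n / 3 - (n - 1) / 3) +
      #(latticeBelow (n - 3)) + 2 * ((n - 1) / 2 + (n - 1) / 3 + ((n - 1) / 2 - n / 3)) +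
      3 * #(latticeBelow (n - 5))) = n ^ 2 + n + if n % 3 = 1 then 1 else 0 := by
  induction n using Nat.strong_induction_on with
  | _ n ih =>
    rcases lt_or_ge n 11 with hn | hn
    · interval_cases n <;> decide
    · obtain ⟨m, rfl⟩ : ∃ m, n = m + 6 := ⟨n - 6, by omega⟩
      have h := ih m (by omega)
      have h2 (x : ℕ) : (x + 6) / 2 = x / 2 + 3 := by omega
      have h3 (x : ℕ) : (x + 6) / 3 = x / 3 + 2 := by omega
      rw [show m + 6 - 3 = m - 3 + 6 by omega, show m + 6 - 5 = m - 5 + 6 by omega,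
        show m + 6 - 1 = m - 1 + 6 by omega, card_latticeBelow_add_six, card_latticeBelow_add_six,
        show (m + 6) % 3 = m % 3 by omega, show (m + 6) ^ 2 = m ^ 2 + 12 * m + 36 by ring]
      simp only [h2, h3] at h ⊢
      generalize m ^ 2 = k, #(latticeBelow (m - 3)) = a, #(latticeBelow (m - 5)) = b at h ⊢
      split_ifs at h ⊢ <;> omega

theorem colength_V3_general (n : ℕ) :
    ((∑ lam : Nat.Partition n, multV3 lam.parts : ℕ) : ℚ)
      = ((n : ℚ) ^ 2 + n + (if n % 3 = 1 then 1 else 0)) / 3 := by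
  rw [sum_multV3_eq, card_filter_parts_eq_singleton, card_filter_parts_eq_pair_self,
    card_filter_parts_eq_triple_self, card_filter_parts_eq_quad_last_one,
    card_filter_parts_eq_pair_distinct, card_filter_parts_eq_triple_smaller_repeated,
    card_filter_parts_eq_triple_larger_repeated, card_filter_parts_eq_triple_distinct,
    eq_div_iff three_ne_zero, mul_comm]
  exact_mod_cast three_mul_weighted_count_eq n

/-- the colength of `Ṽ₃`: the sum of the multiplicities `m_λ(Ṽ₃)`
over all partitions `λ` of `n` equals `(n² + n + δ)/3`, where `δ = 1` if
`n ≡ 1 (mod 3)` and `δ = 0` otherwise. -/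
theorem colength_V3 (n : ℕ) (hn : 1 ≤ n) :
    ((∑ lam : Nat.Partition n, multV3 lam.parts : ℕ) : ℚ)
      = ((n : ℚ) ^ 2 + n + (if n % 3 = 1 then 1 else 0)) / 3 :=
  colength_V3_general n
end

section
/- For a partition λ of n define m(λ) as in the multiplicity formula for Ṽ₃ (1 for (n), (p,p), (p,p,p), and hook-type 4-row partitions (p+q+r+1, p+q+1, p+1, 1); 2 for two-corner partitions of height ≤ 3; 3 for three-corner partitions of height 3; 0 otherwise). Then Σ_{λ ⊢ n} m(λ) = n²/3 + O(n) as n → ∞. -/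
open Finset

namespace V3Colength

lemma card_filter_parts_le {n : ℕ} (P : Multiset ℕ → Prop) [DecidablePred P]
    (M : Finset (Multiset ℕ)) (h : ∀ l : Nat.Partition n, P l.parts → l.parts ∈ M) :
    #{l : Nat.Partition n | P l.parts} ≤ #M :=
  card_le_card_of_injOn Nat.Partition.parts (fun l hl => h l (mem_filter.mp hl).2)
    fun _ _ _ _ => Nat.Partition.ext

lemma card_filter_parts_eq {ι : Type*} {n : ℕ} (P : Multiset ℕ → Prop) [DecidablePred P]
    (f : ι → Multiset ℕ) (hf : Function.Injective f) (hpos : ∀ a, ∀ i ∈ f a, 0 < i)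
    (hP : ∀ s, P s ↔ ∃ a, s = f a) (A : Finset ι) (hA : ∀ a, a ∈ A ↔ (f a).sum = n) :
    #{l : Nat.Partition n | P l.parts} = #A := by
  symm
  refine card_bij (fun a ha => ⟨f a, hpos a _, (hA a).mp ha⟩) ?_ ?_ ?_
  · intro a _
    simpa only [mem_filter, mem_univ, true_and] using (hP _).mpr ⟨a, rfl⟩
  · intro a _ b _ hab
    exact hf (congrArg Nat.Partition.parts hab)
  · intro l hl
    obtain ⟨a, ha⟩ := (hP _).mp (mem_filter.mp hl).2
    exact ⟨a, (hA a).mpr (ha ▸ l.parts_sum), Nat.Partition.ext ha.symm⟩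

lemma eq_of_coe_eq_coe_of_isChain_ge {l₁ l₂ : List ℕ} (h : (l₁ : Multiset ℕ) = l₂)
    (h₁ : l₁.IsChain (· ≥ ·)) (h₂ : l₂.IsChain (· ≥ ·)) : l₁ = l₂ :=
  (Multiset.coe_eq_coe.mp h).eq_of_pairwise' (List.isChain_iff_pairwise.mp h₁)
    (List.isChain_iff_pairwise.mp h₂)

def triangle (a b m : ℕ) : Finset (ℕ × ℕ) :=
  {t ∈ range (m + 1) ×ˢ range (m + 1) | a * t.1 + b * t.2 ≤ m}

lemma two_mul_card_triangle_one_one (m : ℕ) : 2 * #(triangle 1 1 m) = (m + 1) * (m + 2) := by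
  have hrows : #(triangle 1 1 m) = ∑ x ∈ range (m + 1), (m + 1 - 1 - x + 1) := by
    rw [triangle, card_filter, sum_product]
    refine sum_congr rfl fun x hx => ?_
    rw [← card_filter, ← card_range (m + 1 - 1 - x + 1)]
    congr 1
    ext y
    simp only [mem_filter, mem_range] at hx ⊢
    omega
  rw [hrows, sum_range_reflect (fun i => i + 1), sum_add_distrib, sum_const, card_range,
    smul_eq_mul, mul_one, mul_add, mul_comm 2, sum_range_id_mul_two, Nat.add_sub_cancel]
  ring

lemma card_triangle_mul (a b m : ℕ) :
    a * b * #(triangle a b m) = #(triangle a b m ×ˢ (range a ×ˢ range b)) := by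
  simp only [card_product, card_range]
  ring

lemma card_triangle_one_one_le (a b m : ℕ) (ha : 0 < a) (hb : 0 < b) :
    #(triangle 1 1 m) ≤ a * b * #(triangle a b m) := by
  rw [card_triangle_mul]
  refine card_le_card_of_injOn (fun t => ((t.1 / a, t.2 / b), (t.1 % a, t.2 % b))) ?_ ?_
  · intro t ht
    simp only [triangle, mem_coe, mem_filter, mem_product, mem_range, one_mul] at ht ⊢
    have := Nat.div_mul_le_self t.1 a
    have := Nat.div_mul_le_self t.2 b
    refine ⟨⟨⟨?_, ?_⟩, ?_⟩, Nat.mod_lt _ ha, Nat.mod_lt _ hb⟩ <;> nlinarith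
  · rintro ⟨x, y⟩ - ⟨x', y'⟩ - h
    simp only [Prod.ext_iff] at h ⊢
    exact ⟨Nat.div_add_mod x a ▸ Nat.div_add_mod x' a ▸ by rw [h.1.1, h.2.1],
      Nat.div_add_mod y b ▸ Nat.div_add_mod y' b ▸ by rw [h.1.2, h.2.2]⟩

lemma eq_and_eq_of_mul_add_eq_mul_add {a p i p' i' : ℕ} (hi : i < a) (hi' : i' < a)
    (h : a * p + i = a * p' + i') : p = p' ∧ i = i' := by
  have ha : 0 < a := by omega
  have h₁ := (Nat.div_mod_unique ha).mpr ⟨add_comm i (a * p), hi⟩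
  have h₂ := (Nat.div_mod_unique ha).mpr ⟨add_comm i' (a * p'), hi'⟩
  rw [h] at h₁
  exact ⟨h₁.1.symm.trans h₂.1, h₁.2.symm.trans h₂.2⟩

lemma le_card_triangle_one_one (a b m : ℕ) :
    a * b * #(triangle a b m) ≤ #(triangle 1 1 (m + a + b)) := by
  rw [card_triangle_mul]
  refine card_le_card_of_injOn (fun t => (a * t.1.1 + t.2.1, b * t.1.2 + t.2.2)) ?_ ?_
  · rintro ⟨⟨p, q⟩, i, j⟩ ht
    simp only [triangle, mem_coe, mem_filter, mem_product, mem_range, one_mul] at ht ⊢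
    omega
  · rintro ⟨⟨p, q⟩, i, j⟩ ht ⟨⟨p', q'⟩, i', j'⟩ ht' h
    simp only [mem_coe, mem_product, mem_range, Prod.ext_iff] at ht ht' h ⊢
    obtain ⟨rfl, rfl⟩ := eq_and_eq_of_mul_add_eq_mul_add ht.2.1 ht'.2.1 h.1
    obtain ⟨rfl, rfl⟩ := eq_and_eq_of_mul_add_eq_mul_add ht.2.2 ht'.2.2 h.2
    simp

/-- For `k ≤ n`, `#(lattice k n)` is the number of partitions of `n - k` into parts `≤ 3`. -/
def lattice (k n : ℕ) : Finset (ℕ × ℕ × ℕ) :=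
  {t ∈ range (n + 1) ×ˢ range (n + 1) ×ˢ range (n + 1) | 3 * t.1 + 2 * t.2.1 + t.2.2 + k = n}

lemma card_lattice_zero (m : ℕ) : #(lattice 0 m) = #(triangle 3 2 m) := by
  refine card_nbij' (fun t => (t.1, t.2.1)) (fun t => (t.1, t.2, m - 3 * t.1 - 2 * t.2))
    ?_ ?_ ?_ ?_
  · rintro ⟨p, q, r⟩ h
    simp only [lattice, triangle, mem_coe, mem_filter, mem_product, mem_range] at h ⊢
    omega
  · rintro ⟨p, q⟩ h
    simp only [lattice, triangle, mem_coe, mem_filter, mem_product, mem_range] at h ⊢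
    omega
  · rintro ⟨p, q, r⟩ h
    simp only [lattice, mem_coe, mem_filter, mem_product, mem_range] at h
    simp only [Prod.mk.injEq, true_and]
    omega
  · exact fun _ _ => rfl

lemma card_lattice_zero_bounds (m : ℕ) :
    (m + 1) * (m + 2) ≤ 12 * #(lattice 0 m) ∧ 12 * #(lattice 0 m) ≤ (m + 6) * (m + 7) := by
  have hlow := card_triangle_one_one_le 3 2 m (by norm_num) (by norm_num)
  have hhigh := le_card_triangle_one_one 3 2 m
  have := two_mul_card_triangle_one_one m
  have := two_mul_card_triangle_one_one (m + 3 + 2)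
  rw [card_lattice_zero]
  constructor <;> linarith

lemma lattice_add_right (k m : ℕ) : lattice k (m + k) = lattice 0 m := by
  ext ⟨p, q, r⟩
  simp only [lattice, mem_filter, mem_product, mem_range]
  omega

lemma lattice_eq_empty {k n : ℕ} (h : n < k) : lattice k n = ∅ := by
  ext ⟨p, q, r⟩
  simp only [lattice, mem_filter, notMem_empty, iff_false, not_and]
  omega

lemma card_lattice_bounds (k n : ℕ) :
    n ^ 2 ≤ 12 * #(lattice k n) + 2 * k * n ∧ 12 * #(lattice k n) ≤ (n + 6) * (n + 7) := by
  rcases lt_or_ge n k with h | h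
  · rw [lattice_eq_empty h, card_empty]
    constructor <;> nlinarith
  · obtain ⟨m, rfl⟩ := Nat.exists_eq_add_of_le' h
    rw [lattice_add_right]
    obtain ⟨hlow, hhigh⟩ := card_lattice_zero_bounds m
    constructor <;> nlinarith

def IsRectangle (s : Multiset ℕ) : Prop :=
  (∃ n : ℕ, 1 ≤ n ∧ s = {n}) ∨ (∃ p : ℕ, 1 ≤ p ∧ s = {p, p}) ∨ (∃ p : ℕ, 1 ≤ p ∧ s = {p, p, p})

def IsHookType (s : Multiset ℕ) : Prop :=
  ∃ p q r : ℕ, s = {p + q + r + 1, p + q + 1, p + 1, 1}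

def IsTwoCorner (s : Multiset ℕ) : Prop :=
  ∃ p q : ℕ, 1 ≤ p ∧ 1 ≤ q ∧ (s = {p + q, p} ∨ s = {p + q, p, p} ∨ s = {p + q, p + q, p})

def IsThreeCorner (s : Multiset ℕ) : Prop :=
  ∃ p q r : ℕ, 1 ≤ p ∧ 1 ≤ q ∧ 1 ≤ r ∧ s = {p + q + r, p + q, p}

open Classical in
lemma multV3_eq_ite (s : Multiset ℕ) :
    multV3 s = if IsRectangle s ∨ IsHookType s then 1 else if IsTwoCorner s then 2
      else if IsThreeCorner s then 3 else 0 := by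
  unfold multV3 IsRectangle IsHookType IsTwoCorner IsThreeCorner
  congr 1
  simp only [or_assoc]

lemma IsThreeCorner.not_isRectangle_or_isHookType_or_isTwoCorner {s : Multiset ℕ}
    (h : IsThreeCorner s) : ¬ (IsRectangle s ∨ IsHookType s ∨ IsTwoCorner s) := by
  obtain ⟨p, q, r, hp, hq, hr, rfl⟩ := h
  have hcard : Multiset.card ({p + q + r, p + q, p} : Multiset ℕ) = 3 := rfl
  have hnodup : ({p + q + r, p + q, p} : Multiset ℕ).Nodup := by
    simp only [Multiset.insert_eq_cons, Multiset.nodup_cons, Multiset.mem_cons,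
      Multiset.mem_singleton, Multiset.nodup_singleton, not_or, and_true]
    omega
  rintro ((⟨a, -, h⟩ | ⟨a, -, h⟩ | ⟨a, -, h⟩) | ⟨a, b, c, h⟩ | ⟨a, b, -, -, h | h | h⟩) <;>
    rw [h] at hcard hnodup <;> simp at hcard hnodup

open Classical in
lemma hook_add_threeCorner_le_multV3 (s : Multiset ℕ) :
    (if IsHookType s then 1 else 0) + (if IsThreeCorner s then 3 else 0) ≤ multV3 s := by
  have := @IsThreeCorner.not_isRectangle_or_isHookType_or_isTwoCorner s
  rw [multV3_eq_ite]
  split_ifs <;> first | omega | tauto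

open Classical in
lemma multV3_le (s : Multiset ℕ) :
    multV3 s ≤ (if IsHookType s then 1 else 0) + (if IsThreeCorner s then 3 else 0) +
      (if IsRectangle s then 1 else 0) + (if IsTwoCorner s then 2 else 0) := by
  rw [multV3_eq_ite]
  split_ifs <;> first | omega | tauto

def hookParts (t : ℕ × ℕ × ℕ) : Multiset ℕ :=
  {t.1 + t.2.1 + t.2.2 + 1, t.1 + t.2.1 + 1, t.1 + 1, 1}

lemma hookParts_injective : Function.Injective hookParts := by
  rintro ⟨p, q, r⟩ ⟨p', q', r'⟩ h
  have := eq_of_coe_eq_coe_of_isChain_ge h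
    (by simp only [List.isChain_cons_cons, List.isChain_singleton, and_true]; omega)
    (by simp only [List.isChain_cons_cons, List.isChain_singleton, and_true]; omega)
  simp only [List.cons.injEq, and_true] at this
  simp only [Prod.mk.injEq]
  omega

open Classical in
lemma card_isHookType (n : ℕ) : #{l : Nat.Partition n | IsHookType l.parts} = #(lattice 4 n) := by
  refine card_filter_parts_eq IsHookType hookParts hookParts_injective ?_ ?_ _ ?_
  · rintro ⟨p, q, r⟩ i hi
    simp only [hookParts, Multiset.insert_eq_cons, Multiset.mem_cons, Multiset.mem_singleton] at hi
    omega
  · exact fun s => ⟨fun ⟨p, q, r, h⟩ => ⟨(p, q, r), h⟩, fun ⟨⟨p, q, r⟩, h⟩ => ⟨p, q, r, h⟩⟩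
  · rintro ⟨p, q, r⟩
    simp only [lattice, hookParts, mem_filter, mem_product, mem_range, Multiset.insert_eq_cons,
      Multiset.sum_cons, Multiset.sum_singleton]
    omega

def threeCornerParts (t : ℕ × ℕ × ℕ) : Multiset ℕ :=
  {t.1 + t.2.1 + t.2.2 + 3, t.1 + t.2.1 + 2, t.1 + 1}

lemma threeCornerParts_injective : Function.Injective threeCornerParts := by
  rintro ⟨p, q, r⟩ ⟨p', q', r'⟩ h
  have := eq_of_coe_eq_coe_of_isChain_ge h
    (by simp only [List.isChain_cons_cons, List.isChain_singleton, and_true]; omega)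
    (by simp only [List.isChain_cons_cons, List.isChain_singleton, and_true]; omega)
  simp only [List.cons.injEq, and_true] at this
  simp only [Prod.mk.injEq]
  omega

open Classical in
lemma card_isThreeCorner (n : ℕ) :
    #{l : Nat.Partition n | IsThreeCorner l.parts} = #(lattice 6 n) := by
  refine card_filter_parts_eq IsThreeCorner threeCornerParts threeCornerParts_injective ?_ ?_ _ ?_
  · rintro ⟨p, q, r⟩ i hi
    simp only [threeCornerParts, Multiset.insert_eq_cons, Multiset.mem_cons,
      Multiset.mem_singleton] at hi
    omega
  · refine fun s => ⟨?_, ?_⟩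
    · rintro ⟨p, q, r, hp, hq, hr, rfl⟩
      obtain ⟨a, rfl⟩ := Nat.exists_eq_add_of_le' hp
      obtain ⟨b, rfl⟩ := Nat.exists_eq_add_of_le' hq
      obtain ⟨c, rfl⟩ := Nat.exists_eq_add_of_le' hr
      exact ⟨(a, b, c), by rw [threeCornerParts]; ring_nf⟩
    · rintro ⟨⟨a, b, c⟩, rfl⟩
      exact ⟨a + 1, b + 1, c + 1, by omega, by omega, by omega, by rw [threeCornerParts]; ring_nf⟩
  · rintro ⟨p, q, r⟩
    simp only [lattice, threeCornerParts, mem_filter, mem_product, mem_range,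
      Multiset.insert_eq_cons, Multiset.sum_cons, Multiset.sum_singleton]
    omega

open Classical in
lemma card_isRectangle_le (n : ℕ) : #{l : Nat.Partition n | IsRectangle l.parts} ≤ 3 := by
  refine (card_filter_parts_le IsRectangle {{n}, {n / 2, n / 2}, {n / 3, n / 3, n / 3}} ?_).trans
    card_le_three
  rintro l (⟨a, -, h⟩ | ⟨a, -, h⟩ | ⟨a, -, h⟩) <;> have hsum := l.parts_sum <;>
    simp only [h, Multiset.insert_eq_cons, Multiset.sum_cons, Multiset.sum_singleton] at hsum ⊢
  · simp [hsum]
  · simp [show n / 2 = a by omega]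
  · simp [show n / 3 = a by omega]

open Classical in
lemma card_isTwoCorner_le (n : ℕ) :
    #{l : Nat.Partition n | IsTwoCorner l.parts} ≤ 3 * (n + 1) := by
  let M : Finset (Multiset ℕ) := (range (n + 1)).image (fun p => {n - p, p}) ∪
    (range (n + 1)).image (fun p => {n - 2 * p, p, p}) ∪
    (range (n + 1)).image (fun p => {(n - p) / 2, (n - p) / 2, p})
  have hM : #M ≤ 3 * (n + 1) := by
    grw [card_union_le, card_union_le, card_image_le, card_image_le, card_image_le, card_range]
    omega
  refine (card_filter_parts_le IsTwoCorner M ?_).trans hM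
  rintro l ⟨p, q, -, -, h | h | h⟩ <;> have hsum := l.parts_sum <;>
    simp only [h, Multiset.insert_eq_cons, Multiset.sum_cons, Multiset.sum_singleton] at hsum <;>
    simp only [M, h, mem_union, mem_image, mem_range]
  · exact Or.inl (Or.inl ⟨p, by omega, by rw [show n - p = p + q by omega]⟩)
  · exact Or.inl (Or.inr ⟨p, by omega, by rw [show n - 2 * p = p + q by omega]⟩)
  · exact Or.inr ⟨p, by omega, by rw [show (n - p) / 2 = p + q by omega]⟩

open Classical in
lemma card_isHookType_add_le_sum_multV3 (n : ℕ) :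
    #{l : Nat.Partition n | IsHookType l.parts} +
        3 * #{l : Nat.Partition n | IsThreeCorner l.parts} ≤
      ∑ l : Nat.Partition n, multV3 l.parts := by
  calc _ = ∑ l : Nat.Partition n,
        ((if IsHookType l.parts then 1 else 0) + (if IsThreeCorner l.parts then 3 else 0)) := by
        simp only [sum_add_distrib, sum_ite, sum_const, smul_eq_mul]
        ring
    _ ≤ _ := sum_le_sum fun l _ => hook_add_threeCorner_le_multV3 l.parts

open Classical in
lemma sum_multV3_le (n : ℕ) :
    ∑ l : Nat.Partition n, multV3 l.parts ≤
      #{l : Nat.Partition n | IsHookType l.parts} +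
        3 * #{l : Nat.Partition n | IsThreeCorner l.parts} +
        #{l : Nat.Partition n | IsRectangle l.parts} +
        2 * #{l : Nat.Partition n | IsTwoCorner l.parts} := by
  calc _ ≤ ∑ l : Nat.Partition n,
        ((if IsHookType l.parts then 1 else 0) + (if IsThreeCorner l.parts then 3 else 0) +
          (if IsRectangle l.parts then 1 else 0) + (if IsTwoCorner l.parts then 2 else 0)) :=
        sum_le_sum fun l _ => multV3_le l.parts
    _ = _ := by
        simp only [sum_add_distrib, sum_ite, sum_const, smul_eq_mul]
        ring

lemma sum_multV3_bounds (n : ℕ) :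
    4 * n ^ 2 ≤ 12 * ∑ l : Nat.Partition n, multV3 l.parts + 44 * n ∧
      12 * ∑ l : Nat.Partition n, multV3 l.parts ≤ 4 * n ^ 2 + 124 * n + 276 := by
  classical
  have hlow := card_isHookType_add_le_sum_multV3 n
  have hhigh := sum_multV3_le n
  have hrect := card_isRectangle_le n
  have htwo := card_isTwoCorner_le n
  rw [card_isHookType, card_isThreeCorner] at hlow hhigh
  have hhook := card_lattice_bounds 4 n
  have hthree := card_lattice_bounds 6 n
  constructor <;> linarith

end V3Colength

/-- the colength of `Ṽ₃` grows as `n²/3 + O(n)`. -/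
theorem colength_V3_asymptotic :
    ∃ C : ℝ, 0 < C ∧ ∀ n : ℕ,
      |((∑ lam : Nat.Partition n, multV3 lam.parts : ℕ) : ℝ) - (n : ℝ) ^ 2 / 3|
        ≤ C * n + C := by
  refine ⟨23, by norm_num, fun n => ?_⟩
  obtain ⟨hlow, hhigh⟩ := V3Colength.sum_multV3_bounds n
  set S := ∑ l : Nat.Partition n, multV3 l.parts
  have hlow' : 4 * (n : ℝ) ^ 2 ≤ 12 * S + 44 * n := by exact_mod_cast hlow
  have hhigh' : 12 * (S : ℝ) ≤ 4 * n ^ 2 + 124 * n + 276 := by exact_mod_cast hhigh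
  rw [abs_le]
  constructor <;> linarith [(n.cast_nonneg : (0 : ℝ) ≤ n)]
end
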